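/- (Uniqueness of the Procrustes solution) Let C be a real n×n matrix with singular value decomposition C = UΣVᵀ (U, V orthogonal, Σ diagonal with nonnegative entries). If C is invertible, then X_* := VUᵀ is the unique maximizer of Tr(CX) over X ∈ O(n): any X ∈ O(n) with Tr(C X) = Tr(Σ) equals VUᵀ. Conversely, if C is singular, there exist at least two distinct maximizers of Tr(CX) over O(n). -/

import Mathlib

open Matrix

noncomputable section

/-- Matrix exponential of a real square matrix. -/
def mexp {n : ℕ} (A : Matrix (Fin n) (Fin n) ℝ) : Matrix (Fin n) (Fin n) ℝ :=
  NormedSpace.exp A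

/-- Skew-symmetric part: `skew M = (M - Mᵀ)/2`. -/
def skewPart {n : ℕ} (M : Matrix (Fin n) (Fin n) ℝ) : Matrix (Fin n) (Fin n) ℝ :=
  (1 / 2 : ℝ) • (M - Mᵀ)

/-- Frobenius norm of a real square matrix. -/
def frobNorm {n : ℕ} (A : Matrix (Fin n) (Fin n) ℝ) : ℝ :=
  Real.sqrt (∑ i, ∑ j, (A i j) ^ 2)

/-- The singular values of `A`: square roots of the eigenvalues of `AᴴA = AᵀA`. -/
def singVals {n : ℕ} (A : Matrix (Fin n) (Fin n) ℝ) : Fin n → ℝ :=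
  fun i => Real.sqrt ((show (Aᵀ * A).IsHermitian by
    rw [← Matrix.conjTranspose_eq_transpose_of_trivial]
    exact Matrix.isHermitian_conjTranspose_mul_self A).eigenvalues i)

/-- Largest singular value of `A`. -/
def sigmaMax {n : ℕ} (A : Matrix (Fin n) (Fin n) ℝ) : ℝ := ⨆ i, singVals A i

/-- Smallest singular value of `A`. -/
def sigmaMin {n : ℕ} (A : Matrix (Fin n) (Fin n) ℝ) : ℝ := ⨅ i, singVals A i

/-- Spectral norm (largest singular value) of `A`. -/
def specNorm {n : ℕ} (A : Matrix (Fin n) (Fin n) ℝ) : ℝ := sigmaMax A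

/-- Riemannian distance on a connected component of `O(n)`:
`dist(X,Y) = min { ‖Ω‖_F : Ω skew-symmetric, X·exp(Ω) = Y }`. -/
def Odist {n : ℕ} (X Y : Matrix (Fin n) (Fin n) ℝ) : ℝ :=
  sInf {d : ℝ | ∃ Ω : Matrix (Fin n) (Fin n) ℝ, Ωᵀ = -Ω ∧ X * mexp Ω = Y ∧ d = frobNorm Ω}

end

/-!
Substituting `X = V W Uᵀ` turns `Tr(CX)` into `Tr(ΣW) = ∑ σᵢ Wᵢᵢ`, where `W` is orthogonal, so
every `Wᵢᵢ ≤ 1`. If all `σᵢ > 0`, equality with `Tr Σ` forces `Wᵢᵢ = 1` for every `i`, and since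
the columns of `W` are unit vectors this means `W = 1`. If some `σᵢ₀ = 0`, the reflection
flipping the `i₀`-th coordinate is a second `W` with `Tr(ΣW) = Tr Σ`.
-/

namespace Matrix

section Orthogonal

variable {m R : Type*} [Fintype m] [DecidableEq m] [CommRing R]

theorem transpose_mem_orthogonalGroup {A : Matrix m m R} (hA : A ∈ orthogonalGroup m R) :
    Aᵀ ∈ orthogonalGroup m R :=
  (mem_orthogonalGroup_iff' m R).2 <| by
    rw [transpose_transpose]; exact (mem_orthogonalGroup_iff m R).1 hA

theorem transpose_mul_mul_mul_eq_self {A B W : Matrix m m R} (hA : A ∈ orthogonalGroup m R)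
    (hB : B ∈ orthogonalGroup m R) : Aᵀ * (A * W * Bᵀ) * B = W := by
  rw [← Matrix.mul_assoc, ← Matrix.mul_assoc, (mem_orthogonalGroup_iff' m R).1 hA,
    Matrix.one_mul, Matrix.mul_assoc, (mem_orthogonalGroup_iff' m R).1 hB, Matrix.mul_one]

theorem mul_mul_transpose_mul_eq_self {A B X : Matrix m m R} (hA : A ∈ orthogonalGroup m R)
    (hB : B ∈ orthogonalGroup m R) : A * (Aᵀ * X * B) * Bᵀ = X := by
  simpa using transpose_mul_mul_mul_eq_self (transpose_mem_orthogonalGroup hA)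
    (transpose_mem_orthogonalGroup hB) (W := X)

theorem sum_sq_apply_eq_one_of_mem_orthogonalGroup {W : Matrix m m R}
    (hW : W ∈ orthogonalGroup m R) (j : m) : ∑ i, W i j ^ 2 = 1 := by
  simpa [mul_apply, sq] using congrFun (congrFun ((mem_orthogonalGroup_iff' m R).1 hW) j) j

variable [LinearOrder R] [IsStrictOrderedRing R]

theorem apply_le_one_of_mem_orthogonalGroup {W : Matrix m m R}
    (hW : W ∈ orthogonalGroup m R) (i j : m) : W i j ≤ 1 := by
  have hsq : W i j ^ 2 ≤ 1 := by
    rw [← sum_sq_apply_eq_one_of_mem_orthogonalGroup hW j]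
    exact Finset.single_le_sum (fun k _ => sq_nonneg (W k j)) (Finset.mem_univ i)
  exact (abs_le.1 ((sq_le_one_iff_abs_le_one _).1 hsq)).2

theorem eq_one_of_mem_orthogonalGroup_of_diag_eq_one {W : Matrix m m R}
    (hW : W ∈ orthogonalGroup m R) (hdiag : ∀ i, W i i = 1) : W = 1 := by
  ext i j
  obtain rfl | hij := eq_or_ne i j
  · simp [hdiag]
  · have hcol := sum_sq_apply_eq_one_of_mem_orthogonalGroup hW j
    rw [← Finset.add_sum_erase _ _ (Finset.mem_univ j), hdiag j, one_pow, add_eq_left,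
      Finset.sum_eq_zero_iff_of_nonneg (fun k _ => sq_nonneg (W k j))] at hcol
    simpa [one_apply_ne hij] using hcol i (Finset.mem_erase.2 ⟨hij, Finset.mem_univ i⟩)

end Orthogonal

theorem trace_mul_mul_mul_cycle {l m n o R : Type*} [Fintype l] [Fintype m] [Fintype n]
    [Fintype o] [NonUnitalCommSemiring R] (A : Matrix l m R) (B : Matrix m n R)
    (C : Matrix n o R) (D : Matrix o l R) : (A * B * C * D).trace = (B * (C * D * A)).trace := by
  rw [Matrix.mul_assoc A B C, Matrix.mul_assoc A, trace_mul_comm]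
  simp only [Matrix.mul_assoc]

section Diagonal

variable {m K : Type*} [Fintype m] [DecidableEq m]

theorem IsDiag.trace_mul [NonUnitalNonAssocSemiring K] {S : Matrix m m K} (hS : S.IsDiag)
    (W : Matrix m m K) : (S * W).trace = ∑ i, S i i * W i i := by
  conv_lhs => rw [← hS.diagonal_diag]
  simp [trace, diagonal_mul]

theorem IsDiag.isUnit_iff [Field K] {S : Matrix m m K} (hS : S.IsDiag) :
    IsUnit S ↔ ∀ i, S i i ≠ 0 := by
  rw [← hS.diagonal_diag, isUnit_diagonal, Pi.isUnit_iff]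
  simp

theorem isUnit_mul_mul_transpose_iff [CommRing K] {U V : Matrix m m K}
    (hU : U ∈ orthogonalGroup m K) (hV : V ∈ orthogonalGroup m K) (S : Matrix m m K) :
    IsUnit (U * S * Vᵀ) ↔ IsUnit S := by
  have hUunit := IsUnit.of_mul_eq_one _ ((mem_orthogonalGroup_iff m K).1 hU)
  have hVunit := IsUnit.of_mul_eq_one _ ((mem_orthogonalGroup_iff' m K).1 hV)
  simp [IsUnit.mul_iff, hUunit, hVunit]

variable [CommRing K] [LinearOrder K] [IsStrictOrderedRing K] {S : Matrix m m K}

theorem IsDiag.eq_one_of_trace_mul_eq_trace (hS : S.IsDiag) (hpos : ∀ i, 0 < S i i)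
    {W : Matrix m m K} (hW : W ∈ orthogonalGroup m K) (htr : (S * W).trace = S.trace) :
    W = 1 := by
  have hsum : ∑ i, S i i * (1 - W i i) = 0 := by
    simp only [mul_sub, mul_one, Finset.sum_sub_distrib]
    rw [← hS.trace_mul, htr, sub_eq_zero]
    rfl
  rw [Finset.sum_eq_zero_iff_of_nonneg fun i _ =>
    mul_nonneg (hpos i).le (sub_nonneg.2 (apply_le_one_of_mem_orthogonalGroup hW i i))] at hsum
  refine eq_one_of_mem_orthogonalGroup_of_diag_eq_one hW fun i => ?_
  exact (sub_eq_zero.1 ((mul_eq_zero.1 (hsum i (Finset.mem_univ i))).resolve_left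
    (hpos i).ne')).symm

theorem IsDiag.exists_ne_one_trace_mul_eq_trace (hS : S.IsDiag) {i₀ : m} (h₀ : S i₀ i₀ = 0) :
    ∃ D ∈ orthogonalGroup m K, D ≠ 1 ∧ (S * D).trace = S.trace := by
  set d : m → K := fun i => if i = i₀ then -1 else 1
  refine ⟨diagonal d, (mem_orthogonalGroup_iff' m K).2 ?_, fun h => ?_, ?_⟩
  · rw [diagonal_transpose, diagonal_mul_diagonal, ← diagonal_one]
    congr 1
    ext i
    by_cases hi : i = i₀ <;> simp [d, hi]
  · have := congrFun (congrFun h i₀) i₀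
    simp only [diagonal_apply_eq, d, one_apply_eq, if_true] at this
    linarith
  · rw [hS.trace_mul]
    refine Finset.sum_congr rfl fun i _ => ?_
    by_cases hi : i = i₀ <;> simp [d, hi, h₀]

end Diagonal

end Matrix

/-- uniqueness of the Procrustes solution. If `C` is invertible,
`V Uᵀ` is the unique maximizer of `Tr(CX)` over `O(n)`; if `C` is singular
there are at least two distinct maximizers. -/
theorem procrustes_uniqueness {n : ℕ}
    (C U S V : Matrix (Fin n) (Fin n) ℝ)
    (hU : Uᵀ * U = 1) (hV : Vᵀ * V = 1)
    (hSdiag : S.IsDiag) (hSnn : ∀ i, 0 ≤ S i i)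
    (hSVD : C = U * S * Vᵀ) :
    (IsUnit C →
      ∀ X : Matrix (Fin n) (Fin n) ℝ, Xᵀ * X = 1 →
        (C * X).trace = S.trace → X = V * Uᵀ) ∧
    (¬ IsUnit C →
      ∃ X Y : Matrix (Fin n) (Fin n) ℝ,
        Xᵀ * X = 1 ∧ Yᵀ * Y = 1 ∧ X ≠ Y ∧
        (C * X).trace = S.trace ∧ (C * Y).trace = S.trace) := by
  have hUo : U ∈ orthogonalGroup (Fin n) ℝ := (mem_orthogonalGroup_iff' _ _).2 hU
  have hVo : V ∈ orthogonalGroup (Fin n) ℝ := (mem_orthogonalGroup_iff' _ _).2 hV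
  have hC : IsUnit C ↔ ∀ i, S i i ≠ 0 := by
    rw [hSVD, isUnit_mul_mul_transpose_iff hUo hVo, hSdiag.isUnit_iff]
  constructor
  · intro hCunit X hX htr
    have hW : Vᵀ * X * U = 1 :=
      hSdiag.eq_one_of_trace_mul_eq_trace (fun i => (hSnn i).lt_of_ne' (hC.1 hCunit i))
        (mul_mem (mul_mem (transpose_mem_orthogonalGroup hVo)
          ((mem_orthogonalGroup_iff' _ _).2 hX)) hUo)
        (by rw [← trace_mul_mul_mul_cycle, ← hSVD, htr])
    rw [← mul_mul_transpose_mul_eq_self hVo hUo (X := X), hW, Matrix.mul_one]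
  · intro hCsing
    obtain ⟨i₀, hi₀⟩ : ∃ i, S i i = 0 := by simpa [hC] using hCsing
    obtain ⟨D, hDo, hD1, hDtr⟩ := hSdiag.exists_ne_one_trace_mul_eq_trace hi₀
    have horth {W} (hW : W ∈ orthogonalGroup (Fin n) ℝ) : (V * W * Uᵀ)ᵀ * (V * W * Uᵀ) = 1 :=
      (mem_orthogonalGroup_iff' _ _).1
        (mul_mem (mul_mem hVo hW) (transpose_mem_orthogonalGroup hUo))
    have htr (W) : (C * (V * W * Uᵀ)).trace = (S * W).trace := by
      rw [hSVD, trace_mul_mul_mul_cycle, transpose_mul_mul_mul_eq_self hVo hUo]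
    refine ⟨V * 1 * Uᵀ, V * D * Uᵀ, horth (one_mem _), horth hDo, fun h => hD1 ?_,
      by rw [htr, Matrix.mul_one], by rw [htr, hDtr]⟩
    calc D = Vᵀ * (V * D * Uᵀ) * U := (transpose_mul_mul_mul_eq_self hVo hUo).symm
      _ = 1 := by rw [← h, transpose_mul_mul_mul_eq_self hVo hUo]
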